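/- Let m ≥ 1 and let α : ℝ^m → (ℝ^m)* be a smooth map which is ℤ^m-periodic (α(x + p) = α(x) for all p ∈ ℤ^m) and closed, i.e. its derivative is symmetric: D_X(α(·)(Y))(x) = D_Y(α(·)(X))(x) for all x ∈ ℝ^m and X,Y ∈ ℝ^m. Then there exist a smooth ℤ^m-periodic function f : ℝ^m → ℝ and a constant linear form c ∈ (ℝ^m)* such that α(x) = Df(x) + c for all x ∈ ℝ^m. -/

import Mathlib

/-! A closed 1-form on `ℝ^m` has a primitive `F` (Poincaré lemma). Since `α` is `ℤ^m`-periodic,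
`F (x + p) - F x` does not depend on `x`, so it is an additive function of `p ∈ ℤ^m`; extending it
to a linear form `c` on `ℝ^m` makes `F - c` periodic, with differential `α - c`. -/

section Primitive

variable {E F : Type*} [NormedAddCommGroup E] [NormedSpace ℝ E]
  [NormedAddCommGroup F] [NormedSpace ℝ F]

theorem fderiv_clm_apply_const_apply {α : E → E →L[ℝ] F} {x : E}
    (hα : DifferentiableAt ℝ α x) (v w : E) :
    fderiv ℝ (fun q => α q w) x v = fderiv ℝ α x v w := by
  rw [fderiv_clm_apply hα (differentiableAt_const w)]
  simp

theorem sub_eq_sub_of_hasFDerivAt_of_periodic {f : E → F} {α : E → E →L[ℝ] F}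
    (hf : ∀ x, HasFDerivAt f (α x) x) {p : E} (hp : ∀ x, α (x + p) = α x) (x : E) :
    f (x + p) - f x = f p - f 0 := by
  have hzero : ∀ y, HasFDerivAt (fun y => f (y + p) - f y) (0 : E →L[ℝ] F) y := fun y =>
    (((hf (y + p)).comp y ((hasFDerivAt_id y).add_const p)).sub (hf y)).congr_fderiv
      (by simp [hp y])
  simpa using is_const_of_fderiv_eq_zero (fun y => (hzero y).differentiableAt)
    (fun y => (hzero y).fderiv) x 0

end Primitive

section Lattice

variable {ι : Type*} [Fintype ι]

theorem AddMonoidHom.exists_clm_apply_intCast (φ : (ι → ℤ) →+ ℝ) :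
    ∃ c : (ι → ℝ) →L[ℝ] ℝ, ∀ p : ι → ℤ, c (fun i => (p i : ℝ)) = φ p := by
  classical
  refine ⟨∑ i, φ (Pi.single i 1) • ContinuousLinearMap.proj i, fun p => ?_⟩
  have hφ : φ p = ∑ i, (p i : ℝ) * φ (Pi.single i 1) := by
    conv_lhs => rw [pi_eq_sum_univ' p]
    simp_rw [map_sum, map_zsmul, zsmul_eq_mul]
  simp [hφ, mul_comm]

theorem exists_clm_sub_periodic {f : (ι → ℝ) → ℝ}
    (hf : ∀ (x : ι → ℝ) (p : ι → ℤ),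
      f (x + fun i => (p i : ℝ)) - f x = f (fun i => (p i : ℝ)) - f 0) :
    ∃ c : (ι → ℝ) →L[ℝ] ℝ, ∀ (x : ι → ℝ) (p : ι → ℤ),
      f (x + fun i => (p i : ℝ)) - c (x + fun i => (p i : ℝ)) = f x - c x := by
  have hadd : ∀ p q : ι → ℤ, f (fun i => ((p + q) i : ℝ)) - f 0 =
      (f (fun i => (p i : ℝ)) - f 0) + (f (fun i => (q i : ℝ)) - f 0) := fun p q => by
    have hcast : (fun i => ((p + q) i : ℝ)) = (fun i => (q i : ℝ)) + fun i => (p i : ℝ) := by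
      ext; simp [add_comm]
    rw [hcast]
    linarith [hf (fun i => (q i : ℝ)) p]
  obtain ⟨c, hc⟩ :=
    (AddMonoidHom.mk' (fun p : ι → ℤ => f (fun i => (p i : ℝ)) - f 0) hadd).exists_clm_apply_intCast
  refine ⟨c, fun x p => ?_⟩
  have hcp : c (fun i => (p i : ℝ)) = f (fun i => (p i : ℝ)) - f 0 := hc p
  rw [map_add]
  linarith [hf x p]

end Lattice

theorem closed_periodic_one_form (m : ℕ)
    (α : (Fin m → ℝ) → ((Fin m → ℝ) →L[ℝ] ℝ))
    (hα : ContDiff ℝ (⊤ : ℕ∞) α)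
    (hper : ∀ (x : Fin m → ℝ) (p : Fin m → ℤ), α (x + fun i => (p i : ℝ)) = α x)
    (hclosed : ∀ (x X Y : Fin m → ℝ),
      fderiv ℝ (fun q => α q Y) x X = fderiv ℝ (fun q => α q X) x Y) :
    ∃ (f : (Fin m → ℝ) → ℝ) (c : (Fin m → ℝ) →L[ℝ] ℝ),
      ContDiff ℝ (⊤ : ℕ∞) f ∧
      (∀ (x : Fin m → ℝ) (p : Fin m → ℤ), f (x + fun i => (p i : ℝ)) = f x) ∧
      (∀ x, α x = fderiv ℝ f x + c) := by
  have hαd : Differentiable ℝ α := hα.differentiable (by simp)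
  obtain ⟨F, hF⟩ : ∃ F : (Fin m → ℝ) → ℝ, ∀ x, HasFDerivAt F (α x) x := by
    simpa using convex_univ.exists_forall_hasFDerivAt_of_fderiv_symmetric isOpen_univ
      hαd.differentiableOn fun x _ X Y => by
        simpa only [fderiv_clm_apply_const_apply (hαd x)] using hclosed x X Y
  have hFα : fderiv ℝ F = α := funext fun x => (hF x).fderiv
  have hFsmooth : ContDiff ℝ (⊤ : ℕ∞) F :=
    contDiff_infty_iff_fderiv.mpr ⟨fun x => (hF x).differentiableAt, hFα ▸ hα⟩
  obtain ⟨c, hc⟩ := exists_clm_sub_periodic fun x p =>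
    sub_eq_sub_of_hasFDerivAt_of_periodic hF (hper · p) x
  refine ⟨F - c, c, hFsmooth.sub c.contDiff, hc, fun x => ?_⟩
  rw [((hF x).sub c.hasFDerivAt).fderiv, sub_add_cancel]
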